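/- arXiv:2011.10849 — 2 statements merged into one kernel-verified Lean document; each statement's English description precedes it below -/
import Mathlib

section
/- Let N be odd and a ∈ Z/N. The chirp function S_L^ω[τ'] = (1/√N)·e^{(2πi/N)(2⁻¹·a·τ'² + ωτ')}, where 2⁻¹ = (N+1)/2, is a common eigenvector of all the operators H_{τ,aτ}, τ ∈ Z/N; specifically H_{τ,aτ} S_L^ω = e^{(2πi/N)(2⁻¹·a·τ² − ωτ)} S_L^ω. -/
noncomputable def eN (N : ℕ) (x : ZMod N) : ℂ :=
  Complex.exp (2 * Real.pi * Complex.I * (x.val : ℂ) / N)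

noncomputable def Hshift (N : ℕ) (τ ω : ZMod N) (S : ZMod N → ℂ) : ZMod N → ℂ :=
  fun t => eN N (ω * t) * S (t - τ)

/-- The chirp `S_L^ω[τ'] = (1/√N)·e^{(2πi/N)(2⁻¹·a·τ'² + ωτ')}`, `2⁻¹ = (N+1)/2`. -/
noncomputable def chirp (N : ℕ) (a ω : ZMod N) : ZMod N → ℂ :=
  fun τ' => (1 / Real.sqrt N : ℝ) * eN N ((((N + 1) / 2 : ℕ) : ZMod N) * a * τ' ^ 2 + ω * τ')

/-!
Translating the chirp by `τ` and completing the square,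
`2⁻¹a(t - τ)² + ω(t - τ) = 2⁻¹at² + ωt - aτt + (2⁻¹aτ² - ωτ)`,
so the modulation by `e(aτt)` cancels the cross term and leaves the constant phase
`e(2⁻¹aτ² - ωτ)`, since `e` is an additive character of `ZMod N`.
-/

lemma eN_eq_stdAddChar (N : ℕ) [NeZero N] (x : ZMod N) : eN N x = ZMod.stdAddChar x := by
  rw [ZMod.stdAddChar_apply, ZMod.toCircle_apply, eN]

lemma eN_add (N : ℕ) [NeZero N] (x y : ZMod N) : eN N (x + y) = eN N x * eN N y := by
  simp only [eN_eq_stdAddChar, AddChar.map_add_eq_mul]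

lemma natCast_half_succ_mul_two {N : ℕ} (hN : Odd N) :
    (((N + 1) / 2 : ℕ) : ZMod N) * 2 = 1 := by
  obtain ⟨k, rfl⟩ := hN
  have hk : (2 * k + 1 + 1) / 2 = k + 1 := by omega
  have hzero : ((2 * k + 1 : ℕ) : ZMod (2 * k + 1)) = 0 := ZMod.natCast_self _
  rw [hk]
  push_cast at hzero ⊢
  linear_combination hzero

theorem chirp_eigenvector_general (N : ℕ) (hN : Odd N) (a ω τ : ZMod N) :
    Hshift N τ (a * τ) (chirp N a ω) =
      fun t => eN N ((((N + 1) / 2 : ℕ) : ZMod N) * a * τ ^ 2 - ω * τ) * chirp N a ω t := by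
  have : NeZero N := ⟨hN.pos.ne'⟩
  set c : ZMod N := (((N + 1) / 2 : ℕ) : ZMod N)
  have hc : c * 2 = 1 := natCast_half_succ_mul_two hN
  funext t
  have complete_square : a * τ * t + (c * a * (t - τ) ^ 2 + ω * (t - τ))
      = c * a * τ ^ 2 - ω * τ + (c * a * t ^ 2 + ω * t) := by
    linear_combination (-(a * τ * t)) * hc
  simp only [Hshift, chirp]
  rw [mul_left_comm, mul_left_comm (eN N _), ← eN_add, ← eN_add, complete_square]

/-- For N odd, the chirp `S_L^ω` is a common eigenvector of all operators
`H_{τ,aτ}`, with eigenvalue `e^{(2πi/N)(2⁻¹·a·τ² − ωτ)}`. -/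
theorem chirp_eigenvector (N : ℕ) [NeZero N] (hN : Odd N) (a ω τ : ZMod N) :
    Hshift N τ (a * τ) (chirp N a ω) =
      fun t => eN N ((((N + 1) / 2 : ℕ) : ZMod N) * a * τ ^ 2 - ω * τ) * chirp N a ω t :=
  chirp_eigenvector_general N hN a ω τ
end

section
/- One-sparse bit detection without noise: let N = 2^n, and let S[τ] = α·e^{2πi ω₀ τ/N} with α ≠ 0. Suppose the m−1 least significant bits of ω₀ are zero, where 1 ≤ m ≤ n. Then for any r ∈ Z/N: the m-th bit of ω₀ is 0 if and only if S[r] − S[r + N/2^m] = 0, and the m-th bit of ω₀ is 1 if and only if S[r] + S[r + N/2^m] = 0. -/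
/-!
Write `ω₀ = 2^(m-1) k`. Then `ω₀ · N/2^m = k · N/2` in `ZMod N`, so shifting the argument of
the character `τ ↦ e^{2πi ω₀ τ / N}` by `N/2^m` multiplies it by `e^{πik} = (-1)^k`, while the
`m`-th bit of `ω₀` is the parity of `k`. Since `S r ≠ 0`, `S r ∓ S r · (-1)^k` vanishes exactly
when `k` is even (resp. odd).
-/

open Complex ZMod

theorem Nat.two_pow_pred_mul_div_two_pow {N m : ℕ} (hm : 1 ≤ m) (hdvd : 2 ^ m ∣ N) :
    2 ^ (m - 1) * (N / 2 ^ m) = N / 2 := by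
  obtain ⟨t, rfl⟩ := hdvd
  obtain ⟨m, rfl⟩ := Nat.exists_eq_add_of_le' hm
  rw [Nat.mul_div_cancel_left _ (by positivity), pow_succ, mul_assoc, mul_left_comm,
    Nat.mul_div_cancel_left _ two_pos, Nat.add_sub_cancel]

theorem sub_mul_neg_one_pow_eq_zero_iff {R : Type*} [Ring R] [NoZeroDivisors R] [CharZero R]
    {x : R} (hx : x ≠ 0) (k : ℕ) :
    (k.testBit 0 = false ↔ x - x * (-1) ^ k = 0) ∧ (k.testBit 0 = true ↔ x + x * (-1) ^ k = 0) := by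
  rcases k.even_or_odd with hk | hk
  · simp [Nat.testBit_zero, hk.neg_one_pow, Nat.even_iff.mp hk, hx]
  · simp [Nat.testBit_zero, hk.neg_one_pow, Nat.odd_iff.mp hk, hx]

namespace ZMod

variable {N : ℕ} [NeZero N]

theorem exp_mul_val_mul_val_eq_stdAddChar (ω τ : ZMod N) :
    exp (2 * Real.pi * I * ω.val * τ.val / N) = stdAddChar (ω * τ) := by
  have : ω * τ = ((ω.val * τ.val : ℕ) : ℤ) := by push_cast; simp
  rw [this, stdAddChar_coe]
  push_cast
  ring_nf

theorem stdAddChar_natCast_half (h : 2 ∣ N) : stdAddChar ((N / 2 : ℕ) : ZMod N) = -1 := by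
  have hN : (N : ℂ) ≠ 0 := NeZero.ne _
  rw [← Int.cast_natCast, stdAddChar_coe, Int.cast_natCast, Nat.cast_div h two_ne_zero,
    ← exp_pi_mul_I]
  congr 1
  field_simp
  push_cast
  ring

end ZMod

/-- One-sparse bit detection without noise: for N = 2^n and the pure exponential
S[τ] = α·e^{2πi ω₀τ/N} with α ≠ 0, if the m−1 least significant bits of ω₀
vanish (1 ≤ m ≤ n), then the m-th bit of ω₀ is read off from whether
S[r] − S[r + N/2^m] or S[r] + S[r + N/2^m] vanishes. -/
theorem bit_by_bit_no_noise (n : ℕ) (N : ℕ) (hN : N = 2 ^ n) [NeZero N]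
    (α : ℂ) (hα : α ≠ 0) (ω₀ : ZMod N) (S : ZMod N → ℂ)
    (hS : ∀ τ : ZMod N, S τ = α * Complex.exp (2 * Real.pi * Complex.I * (ω₀.val : ℂ) * (τ.val : ℂ) / N))
    (m : ℕ) (hm1 : 1 ≤ m) (hmn : m ≤ n)
    (hbits : 2 ^ (m - 1) ∣ ω₀.val) (r : ZMod N) :
    (Nat.testBit ω₀.val (m - 1) = false ↔ S r - S (r + ((N / 2 ^ m : ℕ) : ZMod N)) = 0) ∧
    (Nat.testBit ω₀.val (m - 1) = true ↔ S r + S (r + ((N / 2 ^ m : ℕ) : ZMod N)) = 0) := by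
  obtain ⟨k, hk⟩ := hbits
  have hdvd : 2 ^ m ∣ N := hN ▸ Nat.pow_dvd_pow 2 hmn
  have hshift_freq : ω₀ * ((N / 2 ^ m : ℕ) : ZMod N) = k • ((N / 2 : ℕ) : ZMod N) := by
    rw [← natCast_zmod_val ω₀, hk, nsmul_eq_mul, ← Nat.two_pow_pred_mul_div_two_pow hm1 hdvd]
    push_cast
    ring
  have hshift : S (r + ((N / 2 ^ m : ℕ) : ZMod N)) = S r * (-1) ^ k := by
    simp only [hS, exp_mul_val_mul_val_eq_stdAddChar, mul_add, AddChar.map_add_eq_mul,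
      hshift_freq, AddChar.map_nsmul_eq_pow,
      stdAddChar_natCast_half ((dvd_pow_self 2 (by omega)).trans hdvd)]
    ring
  have hSr : S r ≠ 0 := hS r ▸ mul_ne_zero hα (exp_ne_zero _)
  have hbit : ω₀.val.testBit (m - 1) = k.testBit 0 := by simp [hk, Nat.testBit_two_pow_mul]
  rw [hbit, hshift]
  exact sub_mul_neg_one_pow_eq_zero_iff hSr k
end
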